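/- arXiv:1808.08264 — 4 statements merged into one kernel-verified Lean document; each statement's English description precedes it below -/
import Mathlib

section
/- Let 𝐗₁ = (X₁; Y₁) and 𝐗₂ = (X₂; Y₂) be frames for Lagrangian subspaces ℓ₁ and ℓ₂ of ℂ^{2n}. Then dim ker(𝐗₁* J 𝐗₂) = dim(ℓ₁ ∩ ℓ₂), and more precisely ℓ₁ ∩ ℓ₂ equals the image of ker(𝐗₁* J 𝐗₂) under the map v ↦ 𝐗₂ v. -/
/-!
The Lagrangian condition on `ℓ₁` says exactly that `ℓ₁ ⊆ ker (𝐗₁* J)`. Since `J` is invertible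
and `𝐗₁` has rank `n`, that kernel has dimension `2n - n = n`, so `ℓ₁ = ker (𝐗₁* J)`. Therefore
`ker (𝐗₁* J 𝐗₂)` is the preimage of `ℓ₁` under `𝐗₂`, whose image is `ℓ₁ ∩ range 𝐗₂ = ℓ₁ ∩ ℓ₂`.
Finally `𝐗₂` is injective, its `n` columns spanning an `n`-dimensional space, so the kernel and
its image have the same dimension.
-/

open Matrix

noncomputable section

def Jmat (n : ℕ) : Matrix (Fin n ⊕ Fin n) (Fin n ⊕ Fin n) ℂ :=
  Matrix.fromBlocks 0 (-1) 1 0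

/-- The `2n × n` matrix with `n × n` blocks `X` (top) and `Y` (bottom). -/
def frame {n : ℕ} (X Y : Matrix (Fin n) (Fin n) ℂ) :
    Matrix (Fin n ⊕ Fin n) (Fin n) ℂ :=
  Matrix.fromRows X Y

/-- A subspace `ℓ ⊆ ℂ^{2n}` is Lagrangian if it has dimension `n` and
`(Ju, v) = 0` for all `u, v ∈ ℓ`. -/
def IsLagrangianSubspace (n : ℕ) (ℓ : Submodule ℂ ((Fin n ⊕ Fin n) → ℂ)) : Prop :=
  Module.finrank ℂ ℓ = n ∧
    ∀ u ∈ ℓ, ∀ v ∈ ℓ, star ((Jmat n) *ᵥ u) ⬝ᵥ v = 0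

/-- The column span of the frame `(X; Y)`. -/
def frameSpan {n : ℕ} (X Y : Matrix (Fin n) (Fin n) ℂ) :
    Submodule ℂ ((Fin n ⊕ Fin n) → ℂ) :=
  Submodule.span ℂ (Set.range (frame X Y)ᵀ)

/-- `(X; Y)` is a frame for a Lagrangian subspace of `ℂ^{2n}`:
its columns span a Lagrangian subspace. -/
def IsLagrangianFrame {n : ℕ} (X Y : Matrix (Fin n) (Fin n) ℂ) : Prop :=
  IsLagrangianSubspace n (frameSpan X Y)

lemma Jmat_mul_neg_Jmat (n : ℕ) : Jmat n * -Jmat n = 1 := by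
  simp [Jmat, fromBlocks_multiply, fromBlocks_neg, ← fromBlocks_one]

lemma isUnit_det_Jmat (n : ℕ) : IsUnit (Jmat n).det :=
  .of_mul_eq_one (-Jmat n).det (by rw [← det_mul, Jmat_mul_neg_Jmat, det_one])

lemma span_range_transpose_le_ker_conjTranspose_mul {R m k : Type*} [CommRing R] [StarRing R]
    [Fintype m] [Fintype k] (A : Matrix m k R) (J : Matrix m m R)
    (hJ : ∀ u ∈ Submodule.span R (Set.range Aᵀ), ∀ v ∈ Submodule.span R (Set.range Aᵀ),
      star (J *ᵥ u) ⬝ᵥ v = 0) :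
    Submodule.span R (Set.range Aᵀ) ≤ LinearMap.ker (Aᴴ * J).mulVecLin := by
  intro w hw
  ext i
  have hcol : Aᵀ i ∈ Submodule.span R (Set.range Aᵀ) := Submodule.subset_span ⟨i, rfl⟩
  calc (Aᴴ * J).mulVecLin w i = star (star (J *ᵥ w) ⬝ᵥ Aᵀ i) := by
        simp [mulVec, dotProduct, conjTranspose_apply, mul_comm]
    _ = 0 := by rw [hJ w hw _ hcol, star_zero]

lemma frameSpan_eq_range {n : ℕ} (X Y : Matrix (Fin n) (Fin n) ℂ) :
    frameSpan X Y = LinearMap.range (frame X Y).mulVecLin :=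
  (range_mulVecLin _).symm

namespace IsLagrangianFrame

variable {n : ℕ} {X Y : Matrix (Fin n) (Fin n) ℂ}

lemma rank_frame (h : IsLagrangianFrame X Y) : (frame X Y).rank = n := by
  rw [rank, ← frameSpan_eq_range]
  exact h.1

lemma injective_mulVecLin (h : IsLagrangianFrame X Y) :
    Function.Injective (frame X Y).mulVecLin := by
  have hdim := LinearMap.finrank_range_add_finrank_ker (frame X Y).mulVecLin
  rw [← frameSpan_eq_range, h.1, Module.finrank_fin_fun] at hdim
  exact LinearMap.ker_eq_bot.mp (Submodule.finrank_eq_zero.mp (by omega))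

open ComplexOrder in
lemma ker_conjTranspose_mul_Jmat (h : IsLagrangianFrame X Y) :
    LinearMap.ker ((frame X Y)ᴴ * Jmat n).mulVecLin = frameSpan X Y := by
  refine (Submodule.eq_of_le_of_finrank_eq
    (span_range_transpose_le_ker_conjTranspose_mul _ _ h.2) ?_).symm
  have hrank : ((frame X Y)ᴴ * Jmat n).rank = n := by
    rw [rank_mul_eq_left_of_isUnit_det _ _ (isUnit_det_Jmat n), rank_conjTranspose, h.rank_frame]
  have hdim := LinearMap.finrank_range_add_finrank_ker ((frame X Y)ᴴ * Jmat n).mulVecLin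
  rw [← rank, hrank, Module.finrank_fintype_fun_eq_card, Fintype.card_sum, Fintype.card_fin] at hdim
  exact h.1.trans (by omega)

end IsLagrangianFrame

/-- For frames `𝐗₁ = (X₁; Y₁)`, `𝐗₂ = (X₂; Y₂)` of Lagrangian subspaces
`ℓ₁`, `ℓ₂` of `ℂ^{2n}`, `dim ker(𝐗₁* J 𝐗₂) = dim(ℓ₁ ∩ ℓ₂)`, and more precisely `ℓ₁ ∩ ℓ₂`
equals the image of `ker(𝐗₁* J 𝐗₂)` under `v ↦ 𝐗₂ v`. -/
theorem ker_eq_intersection {n : ℕ} (X₁ Y₁ X₂ Y₂ : Matrix (Fin n) (Fin n) ℂ)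
    (h₁ : IsLagrangianFrame X₁ Y₁) (h₂ : IsLagrangianFrame X₂ Y₂) :
    Module.finrank ℂ (LinearMap.ker ((frame X₁ Y₁)ᴴ * Jmat n * frame X₂ Y₂).mulVecLin) =
      Module.finrank ℂ (frameSpan X₁ Y₁ ⊓ frameSpan X₂ Y₂ : Submodule ℂ ((Fin n ⊕ Fin n) → ℂ)) ∧
    Submodule.map (frame X₂ Y₂).mulVecLin
        (LinearMap.ker ((frame X₁ Y₁)ᴴ * Jmat n * frame X₂ Y₂).mulVecLin) =
      frameSpan X₁ Y₁ ⊓ frameSpan X₂ Y₂ := by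
  have hmap : Submodule.map (frame X₂ Y₂).mulVecLin
        (LinearMap.ker ((frame X₁ Y₁)ᴴ * Jmat n * frame X₂ Y₂).mulVecLin) =
      frameSpan X₁ Y₁ ⊓ frameSpan X₂ Y₂ := by
    rw [mulVecLin_mul, LinearMap.ker_comp, Submodule.map_comap_eq, h₁.ker_conjTranspose_mul_Jmat,
      frameSpan_eq_range X₂ Y₂, inf_comm]
  exact ⟨hmap ▸ (Submodule.equivMapOfInjective _ h₂.injective_mulVecLin _).finrank_eq, hmap⟩
end
end

section
/- Let 𝐗₂ = (X₂; Y₂) be a frame for a Lagrangian subspace of ℂ^{2n}, let w̃ ∈ ℂ with |w̃| = 1, and set 𝐗₃ = (X₃; Y₃) := i(1 − w̃)𝐗₂ − (1 + w̃)J𝐗₂. Then 𝐗₃*𝐗₃ = (|1 − w̃|² + |1 + w̃|²) 𝐗₂*𝐗₂, 𝐗₃* J 𝐗₃ = 0, and (X₃ − iY₃)(X₃ + iY₃)^{-1} = −(1/w̃)(X₂ − iY₂)(X₂ + iY₂)^{-1}. -/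
open Matrix

noncomputable section

/-!
Writing `𝐗₃ = a𝐗₂ + bJ𝐗₂` with `a = i(1 − w̃)`, `b = −(1 + w̃)`, the first two identities hold
for any `J` with `J* = −J = J⁻¹` and any isotropic frame (`𝐗₂* J 𝐗₂ = 0`): the
cross terms vanish by isotropy, and in `𝐗₃* J 𝐗₃` the surviving coefficient `ā b − b̄ a` vanishes
because `ā b` is real when `|w̃| = 1`. For the third, `J(X; Y) = (−Y; X)` acts as `−i` on `X − iY`
and as `i` on `X + iY`, so `X₃ ∓ iY₃ = (a ∓ ib)(X₂ ∓ iY₂)`, and `(a − ib)/(a + ib) = −1/w̃`.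
-/

namespace Matrix

variable {m k K R : Type*} [Fintype m]

theorem conjTranspose_mul_eq_zero_symm [NonUnitalNonAssocSemiring R] [StarRing R]
    {A B : Matrix m k R} (h : Aᴴ * B = 0) : Bᴴ * A = 0 := by
  rw [← conjTranspose_conjTranspose A, ← conjTranspose_mul, h, conjTranspose_zero]

variable [DecidableEq m]

theorem inv_smul₀ [Field K] (d : K) (B : Matrix m m K) : (d • B)⁻¹ = d⁻¹ • B⁻¹ := by
  rcases eq_or_ne d 0 with rfl | hd
  · simp
  by_cases hB : IsUnit B.det
  · exact inv_smul' _ (Units.mk0 d hd) hB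
  · have hdB : ¬IsUnit (d • B).det := by
      rwa [det_smul, IsUnit.mul_iff, not_and_or, or_iff_right (by simp [hd])]
    rw [nonsing_inv_apply_not_isUnit _ hB, nonsing_inv_apply_not_isUnit _ hdB, smul_zero]

theorem smul_mul_inv_smul [Field K] (c d : K) (A B : Matrix m m K) :
    (c • A) * (d • B)⁻¹ = (c / d) • (A * B⁻¹) := by
  rw [inv_smul₀, smul_mul_smul_comm, div_eq_mul_inv]

variable [CommRing R] [StarRing R] {J : Matrix m m R} {F : Matrix m k R}

theorem conjTranspose_mul_self_smul_add_smul_mul (hJ : Jᴴ * J = 1) (hF : Fᴴ * (J * F) = 0)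
    (a b : R) :
    (a • F + b • (J * F))ᴴ * (a • F + b • (J * F)) = (star a * a + star b * b) • (Fᴴ * F) := by
  have hJF : (J * F)ᴴ * (J * F) = Fᴴ * F := by
    rw [conjTranspose_mul, Matrix.mul_assoc, ← Matrix.mul_assoc Jᴴ, hJ, Matrix.one_mul]
  have hF' : (J * F)ᴴ * F = 0 := conjTranspose_mul_eq_zero_symm hF
  simp only [conjTranspose_add, conjTranspose_smul, Matrix.add_mul, Matrix.mul_add,
    Matrix.smul_mul, Matrix.mul_smul, hF, hF', hJF]
  module

theorem conjTranspose_mul_mul_self_smul_add_smul_mul (hJ : Jᴴ = -J) (hJJ : J * J = -1)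
    (hF : Fᴴ * (J * F) = 0) {a b : R} (hab : star a * b = star b * a) :
    (a • F + b • (J * F))ᴴ * (J * (a • F + b • (J * F))) = 0 := by
  have hJJF : J * (J * F) = -F := by rw [← Matrix.mul_assoc, hJJ, Matrix.neg_mul, Matrix.one_mul]
  have hJF : (J * F)ᴴ * (J * F) = Fᴴ * F := by
    rw [conjTranspose_mul, hJ, Matrix.mul_assoc, Matrix.neg_mul, hJJF, neg_neg]
  have hF' : (J * F)ᴴ * F = 0 := conjTranspose_mul_eq_zero_symm hF
  simp only [conjTranspose_add, conjTranspose_smul, Matrix.add_mul, Matrix.mul_add,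
    Matrix.smul_mul, Matrix.mul_smul, Matrix.mul_neg, hJJF, hF, hJF, hF']
  match_scalars
  linear_combination -hab

end Matrix

theorem Jmat_conjTranspose (n : ℕ) : (Jmat n)ᴴ = -Jmat n := by
  simp [Jmat, fromBlocks_conjTranspose, fromBlocks_neg]

theorem Jmat_mul_self (n : ℕ) : Jmat n * Jmat n = -1 := by
  simp [Jmat, fromBlocks_multiply, ← fromBlocks_one, fromBlocks_neg]

theorem Jmat_conjTranspose_mul_self (n : ℕ) : (Jmat n)ᴴ * Jmat n = 1 := by
  rw [Jmat_conjTranspose, Matrix.neg_mul, Jmat_mul_self, neg_neg]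

theorem Jmat_mul_frame {n : ℕ} (X Y : Matrix (Fin n) (Fin n) ℂ) :
    Jmat n * frame X Y = frame (-Y) X := by
  simp [Jmat, frame, fromBlocks_mul_fromRows]

theorem frame_smul_add_smul_Jmat_mul {n : ℕ} (a b : ℂ) (X Y : Matrix (Fin n) (Fin n) ℂ) :
    a • frame X Y + b • (Jmat n * frame X Y) = frame (a • X - b • Y) (a • Y + b • X) := by
  rw [Jmat_mul_frame]
  ext (i | i) j <;> simp [frame, sub_eq_add_neg]

theorem IsLagrangianFrame.conjTranspose_mul_Jmat_mul {n : ℕ} {X Y : Matrix (Fin n) (Fin n) ℂ}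
    (h : IsLagrangianFrame X Y) : (frame X Y)ᴴ * (Jmat n * frame X Y) = 0 := by
  have hcol (j : Fin n) : (frame X Y)ᵀ j ∈ frameSpan X Y :=
    Submodule.subset_span (Set.mem_range_self j)
  have hiso : (Jmat n * frame X Y)ᴴ * frame X Y = 0 := by
    ext j k
    simpa [Matrix.mul_apply, dotProduct, mulVec, mul_comm] using h.2 _ (hcol j) _ (hcol k)
  exact conjTranspose_mul_eq_zero_symm hiso

open Complex in
def frameCayley {n : ℕ} (X Y : Matrix (Fin n) (Fin n) ℂ) : Matrix (Fin n) (Fin n) ℂ :=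
  (X - I • Y) * (X + I • Y)⁻¹

open Complex in
theorem frameCayley_eq_smul_of_frame_eq {n : ℕ} {X Y X' Y' : Matrix (Fin n) (Fin n) ℂ}
    {a b : ℂ} (h : frame X' Y' = a • frame X Y + b • (Jmat n * frame X Y)) :
    frameCayley X' Y' = ((a - I * b) / (a + I * b)) • frameCayley X Y := by
  rw [frame_smul_add_smul_Jmat_mul, frame, frame, fromRows_inj.eq_iff] at h
  obtain ⟨rfl, rfl⟩ := h
  have hminus : a • X - b • Y - I • (a • Y + b • X) = (a - I * b) • (X - I • Y) := by
    linear_combination (norm := module) (-b * I_sq) • Y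
  have hplus : a • X - b • Y + I • (a • Y + b • X) = (a + I * b) • (X + I • Y) := by
    linear_combination (norm := module) (-b * I_sq) • Y
  rw [frameCayley, frameCayley, hminus, hplus, smul_mul_inv_smul]

/-- Let `𝐗₂ = (X₂; Y₂)` be a frame for a Lagrangian subspace of `ℂ^{2n}`,
`|w̃| = 1`, and `𝐗₃ = (X₃; Y₃) := i(1 − w̃)𝐗₂ − (1 + w̃)J𝐗₂`. Then
`𝐗₃*𝐗₃ = (|1 − w̃|² + |1 + w̃|²)𝐗₂*𝐗₂`, `𝐗₃* J 𝐗₃ = 0`, and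
`(X₃ − iY₃)(X₃ + iY₃)⁻¹ = −(1/w̃)(X₂ − iY₂)(X₂ + iY₂)⁻¹`. -/
theorem rotated_frame_identities {n : ℕ} (X₂ Y₂ X₃ Y₃ : Matrix (Fin n) (Fin n) ℂ)
    (h₂ : IsLagrangianFrame X₂ Y₂) (w : ℂ) (hw : ‖w‖ = 1)
    (h₃ : frame X₃ Y₃ =
      (Complex.I * (1 - w)) • frame X₂ Y₂ - (1 + w) • (Jmat n * frame X₂ Y₂)) :
    (frame X₃ Y₃)ᴴ * frame X₃ Y₃ =
      ((‖1 - w‖ ^ 2 + ‖1 + w‖ ^ 2 : ℝ) : ℂ) •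
        ((frame X₂ Y₂)ᴴ * frame X₂ Y₂) ∧
    (frame X₃ Y₃)ᴴ * (Jmat n * frame X₃ Y₃) = 0 ∧
    (X₃ - Complex.I • Y₃) * (X₃ + Complex.I • Y₃)⁻¹ =
      (-w⁻¹) • ((X₂ - Complex.I • Y₂) * (X₂ + Complex.I • Y₂)⁻¹) := by
  rw [sub_eq_add_neg, ← neg_smul] at h₃
  have hiso := h₂.conjTranspose_mul_Jmat_mul
  have hww : starRingEnd ℂ w * w = 1 := by
    rw [Complex.conj_mul', hw]; norm_num
  have hw0 : w ≠ 0 := by rintro rfl; simp at hww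
  refine ⟨?_, ?_, ?_⟩
  · rw [h₃, conjTranspose_mul_self_smul_add_smul_mul (Jmat_conjTranspose_mul_self n) hiso]
    congr 1
    simp only [Complex.star_def, Complex.conj_mul', Complex.norm_mul, Complex.norm_I, norm_neg]
    push_cast
    ring
  · rw [h₃]
    refine conjTranspose_mul_mul_self_smul_add_smul_mul (Jmat_conjTranspose n) (Jmat_mul_self n)
      hiso ?_
    simp only [star_mul', star_sub, star_add, star_neg, star_one, RCLike.star_def, Complex.conj_I]
    linear_combination (-2 * Complex.I) * hww
  · change frameCayley X₃ Y₃ = _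
    rw [frameCayley_eq_smul_of_frame_eq h₃,
      show Complex.I * (1 - w) + Complex.I * -(1 + w) = -(2 * Complex.I) * w by ring]
    congr 1
    field_simp
    ring
end
end

section
/- Let W : (a,b) → ℂ^{n×n} be a path of unitary matrices that is differentiable at t₀ ∈ (a,b) and continuous near t₀, define Ω(t₀) := −i W(t₀)^{-1} W'(t₀) (so that W'(t₀) = i W(t₀) Ω(t₀)), and let θ ∈ ℝ be such that e^{iθ} is not an eigenvalue of W(t₀). Then the path A(t) := i(e^{iθ}I − W(t))^{-1}(e^{iθ}I + W(t)), defined for t near t₀, is differentiable at t₀ with A'(t₀) = 2 ((e^{iθ}I − W(t₀))^{-1})* Ω(t₀) (e^{iθ}I − W(t₀))^{-1}. -/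
/-!
With `M = e^{iθ} - W`, the product rule and `(M⁻¹)' = -M⁻¹ M' M⁻¹` give
`A' = i M⁻¹ W' M⁻¹ (e^{iθ} + W + M) = 2i e^{iθ} M⁻¹ W' M⁻¹`. Since `W` is unitary
and `|e^{iθ}| = 1`, `W M* = -e^{-iθ} M`, i.e. `(M⁻¹)* W⁻¹ = -e^{iθ} M⁻¹`, which turns
this into `2 (M⁻¹)* (-i W⁻¹ W') M⁻¹`.
-/

open Matrix

open scoped Ring

section Calculus

variable {𝕜 R : Type*} [NontriviallyNormedField 𝕜] [NormedRing R] [NormedAlgebra 𝕜 R]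
  [HasSummableGeomSeries R] {f : 𝕜 → R} {f' : R} {x : 𝕜}

theorem HasDerivAt.ringInverse (hf : HasDerivAt f f' x) (hx : IsUnit (f x)) :
    HasDerivAt (fun t => (f t)⁻¹ʳ) (-((f x)⁻¹ʳ * f' * (f x)⁻¹ʳ)) x := by
  obtain ⟨u, hu⟩ := hx
  rw [← hu, Ring.inverse_unit]
  exact (hasFDerivAt_ringInverse u).comp_hasDerivAt_of_eq x hf hu

theorem HasDerivAt.ringInverse_sub_mul_add (hf : HasDerivAt f f' x) (c : R)
    (hx : IsUnit (c - f x)) :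
    HasDerivAt (fun t => (c - f t)⁻¹ʳ * (c + f t))
      ((c - f x)⁻¹ʳ * f' * (c - f x)⁻¹ʳ * (2 * c)) x := by
  refine (((hf.const_sub c).ringInverse hx).mul (hf.const_add c)).congr_deriv ?_
  calc -((c - f x)⁻¹ʳ * -f' * (c - f x)⁻¹ʳ) * (c + f x) + (c - f x)⁻¹ʳ * f'
      = (c - f x)⁻¹ʳ * f' * (c - f x)⁻¹ʳ * ((c + f x) + (c - f x)) := by
        rw [mul_add _ (c + f x), Ring.inverse_mul_cancel_right _ _ hx]; noncomm_ring
    _ = (c - f x)⁻¹ʳ * f' * (c - f x)⁻¹ʳ * (2 * c) := by noncomm_ring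

end Calculus

theorem Matrix.hasDerivAt_iff_entrywise {𝕜 α m n : Type*} [NontriviallyNormedField 𝕜]
    [NormedAddCommGroup α] [NormedSpace 𝕜 α] [Fintype n] {W : 𝕜 → Matrix m n α}
    {W' : Matrix m n α} {x : 𝕜} :
    HasDerivAt W W' x ↔ ∀ i j, HasDerivAt (fun t => W t i j) (W' i j) x :=
  hasDerivAt_pi.trans (forall_congr' fun _ => hasDerivAt_pi)

theorem star_ringInverse_smul_one_sub_mul_star {K R : Type*} [CommRing K] [StarRing K] [Ring R]
    [StarRing R] [Algebra K R] [StarModule K R] {z : K} {w : R} (hz : z ∈ unitary K)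
    (hw : w ∈ unitary R) (h : IsUnit (z • 1 - w)) :
    star (z • 1 - w)⁻¹ʳ * star w = -(z • (z • 1 - w)⁻¹ʳ) := by
  set m := z • (1 : R) - w
  have hwm : star w * m = -(z • star m) := by
    simp only [m, star_sub, star_smul, star_one, mul_sub, mul_smul_comm, mul_one, smul_sub,
      smul_smul, Unitary.star_mul_self_of_mem hw, Unitary.mul_star_self_of_mem hz, one_smul]
    abel
  calc star m⁻¹ʳ * star w
      = star m⁻¹ʳ * (star w * m) * m⁻¹ʳ := by
        rw [← mul_assoc, Ring.mul_inverse_cancel_right _ _ h]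
    _ = -(z • m⁻¹ʳ) := by
        rw [hwm, mul_neg, mul_smul_comm, ← star_mul, Ring.mul_inverse_cancel m h, star_one,
          neg_mul, smul_one_mul]

theorem Complex.exp_ofReal_mul_I_mem_unitary (θ : ℝ) :
    Complex.exp (θ * Complex.I) ∈ unitary ℂ := by
  rw [Unitary.mem_iff_star_mul_self, Complex.star_def, Complex.conj_mul',
    Complex.norm_exp_ofReal_mul_I, Complex.ofReal_one, one_pow]

theorem cayley_hasDerivAt_general {n : ℕ} (a b t₀ : ℝ) (ht₀ : t₀ ∈ Set.Ioo a b)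
    (W : ℝ → Matrix (Fin n) (Fin n) ℂ) (W' : Matrix (Fin n) (Fin n) ℂ)
    (hWu : ∀ t ∈ Set.Ioo a b, W t ∈ Matrix.unitaryGroup (Fin n) ℂ)
    (hWd : ∀ i j, HasDerivAt (fun t => W t i j) (W' i j) t₀)
    (θ : ℝ) (hθ : Complex.exp (θ * Complex.I) ∉ spectrum ℂ (W t₀)) :
    ∀ i j, HasDerivAt
      (fun t => (Complex.I •
        ((Complex.exp (θ * Complex.I) • (1 : Matrix (Fin n) (Fin n) ℂ) - W t)⁻¹ *
          (Complex.exp (θ * Complex.I) • (1 : Matrix (Fin n) (Fin n) ℂ) + W t))) i j)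
      (((2 : ℂ) •
        (((Complex.exp (θ * Complex.I) • (1 : Matrix (Fin n) (Fin n) ℂ) - W t₀)⁻¹)ᴴ *
          ((-Complex.I) • ((W t₀)⁻¹ * W')) *
          (Complex.exp (θ * Complex.I) • (1 : Matrix (Fin n) (Fin n) ℂ) - W t₀)⁻¹)) i j) t₀ := by
  -- Any matrix norm will do: `HasDerivAt` only sees the topology, the product one.
  let : NormedRing (Matrix (Fin n) (Fin n) ℂ) := Matrix.linftyOpNormedRing
  let : NormedAlgebra ℝ (Matrix (Fin n) (Fin n) ℂ) := Matrix.linftyOpNormedAlgebra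
  set E := Complex.exp (θ * Complex.I)
  have hWt₀ : W t₀ ∈ unitary _ := hWu t₀ ht₀
  have hM : IsUnit (E • 1 - W t₀) := by
    simpa [Algebra.algebraMap_eq_smul_one] using spectrum.notMem_iff.1 hθ
  have hA := ((hasDerivAt_iff_entrywise.2 hWd).ringInverse_sub_mul_add (E • 1) hM).const_smul
    Complex.I
  rw [inv_eq_left_inv (Unitary.star_mul_self_of_mem hWt₀)]
  simp only [nonsing_inv_eq_ringInverse, ← star_eq_conjTranspose] at hA ⊢
  refine hasDerivAt_iff_entrywise.1 (hA.congr_deriv ?_)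
  rw [mul_smul_comm (-Complex.I), smul_mul_assoc, ← mul_assoc (star _),
    star_ringInverse_smul_one_sub_mul_star (Complex.exp_ofReal_mul_I_mem_unitary θ) hWt₀ hM]
  simp only [neg_mul, smul_mul_assoc, mul_smul_comm, mul_one, mul_two]
  module

/-- Let `W : (a,b) → ℂ^{n×n}` be a path of unitary matrices, continuous
near `t₀ ∈ (a,b)` and differentiable at `t₀` with derivative `W'`; set
`Ω := −i W(t₀)⁻¹ W'` (so that `W'(t₀) = i W(t₀) Ω`), and let `θ ∈ ℝ` be such that `e^{iθ}`
is not an eigenvalue of `W(t₀)`. Then `A(t) := i(e^{iθ}I − W(t))⁻¹(e^{iθ}I + W(t))` is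
differentiable at `t₀` with
`A'(t₀) = 2((e^{iθ}I − W(t₀))⁻¹)* Ω (e^{iθ}I − W(t₀))⁻¹`. -/
theorem cayley_hasDerivAt {n : ℕ} (a b t₀ : ℝ) (ht₀ : t₀ ∈ Set.Ioo a b)
    (W : ℝ → Matrix (Fin n) (Fin n) ℂ) (W' : Matrix (Fin n) (Fin n) ℂ)
    (hWu : ∀ t ∈ Set.Ioo a b, W t ∈ Matrix.unitaryGroup (Fin n) ℂ)
    (hWc : ∀ i j, ContinuousAt (fun t => W t i j) t₀)
    (hWd : ∀ i j, HasDerivAt (fun t => W t i j) (W' i j) t₀)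
    (θ : ℝ) (hθ : Complex.exp (θ * Complex.I) ∉ spectrum ℂ (W t₀)) :
    ∀ i j, HasDerivAt
      (fun t => (Complex.I •
        ((Complex.exp (θ * Complex.I) • (1 : Matrix (Fin n) (Fin n) ℂ) - W t)⁻¹ *
          (Complex.exp (θ * Complex.I) • (1 : Matrix (Fin n) (Fin n) ℂ) + W t))) i j)
      (((2 : ℂ) •
        (((Complex.exp (θ * Complex.I) • (1 : Matrix (Fin n) (Fin n) ℂ) - W t₀)⁻¹)ᴴ *
          ((-Complex.I) • ((W t₀)⁻¹ * W')) *
          (Complex.exp (θ * Complex.I) • (1 : Matrix (Fin n) (Fin n) ℂ) - W t₀)⁻¹)) i j) t₀ :=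
  cayley_hasDerivAt_general a b t₀ ht₀ W W' hWu hWd θ hθ
end

section
/- Let W : (a,b) → ℂ^{n×n} be a path of unitary matrices differentiable at t₀ with W'(t₀) = i W(t₀) Ω(t₀) where Ω(t₀) := −i W(t₀)^{-1} W'(t₀), let θ ∈ ℝ with e^{iθ} not an eigenvalue of W(t₀), and set A(t) := i(e^{iθ}I − W(t))^{-1}(e^{iθ}I + W(t)) for t near t₀. If w₀ is an eigenvalue of W(t₀) and P₀ denotes the orthogonal projection onto the eigenspace ker(W(t₀) − w₀ I), then P₀ A'(t₀) P₀ = (2/|e^{iθ} − w₀|²) P₀ Ω(t₀) P₀. -/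
/-!
Write `z = e^{iθ}` and `B(t) = z - W(t)`. Differentiating `B(t) A(t) = i (z + W(t))`, which holds
near `t₀`, and using `z + W = 2z - B` gives the derivative of the Cayley transform,
`A'(t₀) = 2iz B⁻¹ W' B⁻¹`. Since `W(t₀)` is unitary and `|w₀| = 1`, the hermitian `P₀` is also a
left eigenvector, `P₀ W(t₀) = w₀ P₀`, so `B⁻¹` acts on either side of `P₀` as `(z - w₀)⁻¹`, and
`P₀ W(t₀)⁻¹ = w̄₀ P₀`. What remains is the identity `z / (z - w)² = -w̄ / |z - w|²` for unimodular
`z ≠ w`.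
-/

open Matrix

noncomputable section

open Topology

section EntrywiseDerivative

variable {𝕜 𝔸 : Type*} [NontriviallyNormedField 𝕜] [NormedRing 𝔸] [NormedAlgebra 𝕜 𝔸]
  {l m p : Type*} [Fintype m] {x : 𝕜}

theorem hasDerivAt_matrix_mul_apply {X : 𝕜 → Matrix l m 𝔸} {Y : 𝕜 → Matrix m p 𝔸}
    {X' : Matrix l m 𝔸} {Y' : Matrix m p 𝔸}
    (hX : ∀ i j, HasDerivAt (fun t => X t i j) (X' i j) x)
    (hY : ∀ i j, HasDerivAt (fun t => Y t i j) (Y' i j) x) (i : l) (j : p) :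
    HasDerivAt (fun t => (X t * Y t) i j) ((X' * Y x + X x * Y') i j) x := by
  simp only [mul_apply, Matrix.add_apply, ← Finset.sum_add_distrib]
  exact HasDerivAt.fun_sum fun k _ => (hX i k).fun_mul (hY k j)

theorem add_mul_eq_of_mul_eventuallyEq {X : 𝕜 → Matrix l m 𝔸} {Y : 𝕜 → Matrix m p 𝔸}
    {Z : 𝕜 → Matrix l p 𝔸} {X' : Matrix l m 𝔸} {Y' : Matrix m p 𝔸} {Z' : Matrix l p 𝔸}
    (hX : ∀ i j, HasDerivAt (fun t => X t i j) (X' i j) x)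
    (hY : ∀ i j, HasDerivAt (fun t => Y t i j) (Y' i j) x)
    (hZ : ∀ i j, HasDerivAt (fun t => Z t i j) (Z' i j) x)
    (h : (fun t => X t * Y t) =ᶠ[𝓝 x] Z) :
    X' * Y x + X x * Y' = Z' := by
  ext i j
  refine ((hasDerivAt_matrix_mul_apply hX hY i j).congr_of_eventuallyEq ?_).unique (hZ i j)
  filter_upwards [h] with t ht
  rw [ht]

end EntrywiseDerivative

theorem Matrix.eventually_isUnit_det {α n K : Type*} [TopologicalSpace α] [Fintype n]
    [DecidableEq n] [Field K] [TopologicalSpace K] [IsTopologicalRing K] [T1Space K]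
    {B : α → Matrix n n K} {x : α} (hB : ContinuousAt B x) (h : IsUnit (B x).det) :
    ∀ᶠ t in 𝓝 x, IsUnit (B t).det :=
  ((continuous_id.matrix_det.continuousAt.comp hB).eventually_ne h.ne_zero).mono
    fun _ => isUnit_iff_ne_zero.mpr

section Cayley

variable {𝕜 𝕂 n : Type*} [NontriviallyNormedField 𝕜] [NormedField 𝕂] [NormedAlgebra 𝕜 𝕂]
  [Fintype n] [DecidableEq n]

theorem cayley_deriv_eq {W : 𝕜 → Matrix n n 𝕂} {W' A' : Matrix n n 𝕂} {x : 𝕜} {z c : 𝕂}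
    (hW : ∀ i j, HasDerivAt (fun t => W t i j) (W' i j) x)
    (hB : IsUnit (z • 1 - W x).det)
    (hA : ∀ i j, HasDerivAt (fun t => (c • ((z • 1 - W t)⁻¹ * (z • 1 + W t))) i j) (A' i j) x) :
    A' = (2 * c * z) • ((z • 1 - W x)⁻¹ * W' * (z • 1 - W x)⁻¹) := by
  set B : 𝕜 → Matrix n n 𝕂 := fun t => z • 1 - W t
  have hBd : ∀ i j, HasDerivAt (fun t => B t i j) ((-W') i j) x := fun i j => by
    simpa [B] using (hW i j).const_sub ((z • (1 : Matrix n n 𝕂)) i j)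
  have hCd : ∀ i j, HasDerivAt (fun t => (c • (z • 1 + W t)) i j) ((c • W') i j) x :=
    fun i j => by simpa using ((hW i j).const_add ((z • (1 : Matrix n n 𝕂)) i j)).const_mul c
  have hBc : ContinuousAt B x :=
    continuousAt_pi.2 fun i => continuousAt_pi.2 fun j => (hBd i j).continuousAt
  have hBA : (fun t => B t * (c • ((B t)⁻¹ * (z • 1 + W t)))) =ᶠ[𝓝 x]
      fun t => c • (z • 1 + W t) := by
    filter_upwards [Matrix.eventually_isUnit_det hBc hB] with t ht
    rw [mul_smul_comm, ← mul_assoc, mul_nonsing_inv _ ht, one_mul]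
  have hA₀ : c • ((B x)⁻¹ * (z • 1 + W x)) = c • ((2 * z) • (B x)⁻¹ - 1) := by
    have hC : z • 1 + W x = (2 * z) • 1 - B x := by simp only [B]; module
    rw [hC, mul_sub, mul_smul_comm, mul_one, nonsing_inv_mul _ hB]
  have hBA' : B x * A' = (2 * c * z) • (W' * (B x)⁻¹) := by
    have key := add_mul_eq_of_mul_eventuallyEq hBd hA hCd hBA
    rw [hA₀] at key
    calc B x * A' = c • W' - -W' * c • ((2 * z) • (B x)⁻¹ - 1) := by rw [← key]; abel
      _ = (2 * c * z) • (W' * (B x)⁻¹) := by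
        simp only [neg_mul, mul_smul_comm, mul_sub, mul_one]; module
  calc A' = (B x)⁻¹ * (B x * A') := by rw [← mul_assoc, nonsing_inv_mul _ hB, one_mul]
    _ = _ := by rw [hBA', mul_smul_comm, ← mul_assoc]

end Cayley

theorem IsSelfAdjoint.mul_star_eq_of_mul_eq_smul {R : Type*} [Ring R] [StarRing R] [Algebra ℂ R]
    [StarModule ℂ R] {u p : R} {w : ℂ} (hp : IsSelfAdjoint p) (h : u * p = w • p) :
    p * star u = starRingEnd ℂ w • p := by
  simpa [hp.star_eq] using congrArg star h

theorem IsSelfAdjoint.mul_eq_smul_of_mul_eq_smul {R : Type*} [Ring R] [StarRing R] [Algebra ℂ R]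
    [StarModule ℂ R] {u p : R} {w : ℂ} (hu : u ∈ unitary R) (hp : IsSelfAdjoint p)
    (hw : ‖w‖ = 1) (h : u * p = w • p) :
    p * u = w • p := by
  have hw' : w * starRingEnd ℂ w = 1 := by rw [Complex.mul_conj', hw]; norm_num
  calc p * u = (w * starRingEnd ℂ w) • (p * u) := by rw [hw', one_smul]
    _ = w • (p * star u * u) := by rw [hp.mul_star_eq_of_mul_eq_smul h, smul_mul_assoc, mul_smul]
    _ = w • p := by rw [mul_assoc, Unitary.star_mul_self_of_mem hu, mul_one]

section InverseOnEigenspace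

variable {n K : Type*} [Fintype n] [DecidableEq n] [Field K] {B P : Matrix n n K} {c : K}

theorem Matrix.nonsing_inv_mul_eq_smul (hB : IsUnit B.det) (hc : c ≠ 0) (h : B * P = c • P) :
    B⁻¹ * P = c⁻¹ • P := by
  rw [eq_inv_smul_iff₀ hc, ← mul_smul_comm, ← h, ← mul_assoc, nonsing_inv_mul _ hB, one_mul]

theorem Matrix.mul_nonsing_inv_eq_smul (hB : IsUnit B.det) (hc : c ≠ 0) (h : P * B = c • P) :
    P * B⁻¹ = c⁻¹ • P := by
  rw [eq_inv_smul_iff₀ hc, ← smul_mul_assoc, ← h, mul_assoc, mul_nonsing_inv _ hB, mul_one]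

theorem Matrix.mul_nonsing_inv_mul_nonsing_inv_mul (hB : IsUnit B.det) (hc : c ≠ 0)
    (hBP : B * P = c • P) (hPB : P * B = c • P) (M : Matrix n n K) :
    P * (B⁻¹ * M * B⁻¹) * P = (c ^ 2)⁻¹ • (P * M * P) := by
  rw [← mul_assoc, ← mul_assoc, mul_nonsing_inv_eq_smul hB hc hPB, mul_assoc _ _ P,
    nonsing_inv_mul_eq_smul hB hc hBP, smul_mul_assoc, smul_mul_assoc,
    mul_smul_comm, smul_smul, ← mul_inv, sq]

end InverseOnEigenspace

theorem Complex.div_sub_sq_eq_neg_conj_div_norm_sq {z w : ℂ} (hz : ‖z‖ = 1) (hw : ‖w‖ = 1)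
    (hzw : z ≠ w) : z / (z - w) ^ 2 = -starRingEnd ℂ w / (‖z - w‖ ^ 2 : ℝ) := by
  have hz' : z * starRingEnd ℂ z = 1 := by rw [Complex.mul_conj', hz]; norm_num
  have hw' : w * starRingEnd ℂ w = 1 := by rw [Complex.mul_conj', hw]; norm_num
  have hzw' : z - w ≠ 0 := sub_ne_zero.2 hzw
  have hc : starRingEnd ℂ (z - w) ≠ 0 := (map_ne_zero _).2 hzw'
  rw [Complex.ofReal_pow, ← Complex.mul_conj',
    div_eq_div_iff (pow_ne_zero 2 hzw') (mul_ne_zero hzw' hc), map_sub]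
  linear_combination (z - w) * hz' - (z - w) * hw'

theorem projected_derivative_general {n : ℕ} (a b t₀ : ℝ) (ht₀ : t₀ ∈ Set.Ioo a b)
    (W : ℝ → Matrix (Fin n) (Fin n) ℂ) (W' A' : Matrix (Fin n) (Fin n) ℂ)
    (hWu : ∀ t ∈ Set.Ioo a b, W t ∈ Matrix.unitaryGroup (Fin n) ℂ)
    (hWd : ∀ i j, HasDerivAt (fun t => W t i j) (W' i j) t₀)
    (θ : ℝ) (hθ : Complex.exp (θ * Complex.I) ∉ spectrum ℂ (W t₀))
    (hAd : ∀ i j, HasDerivAt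
      (fun t => (Complex.I •
        ((Complex.exp (θ * Complex.I) • (1 : Matrix (Fin n) (Fin n) ℂ) - W t)⁻¹ *
          (Complex.exp (θ * Complex.I) • (1 : Matrix (Fin n) (Fin n) ℂ) + W t))) i j)
      (A' i j) t₀)
    (w₀ : ℂ) (hw₀ : w₀ ∈ spectrum ℂ (W t₀))
    (P₀ : Matrix (Fin n) (Fin n) ℂ)
    (hP₀herm : P₀.IsHermitian)
    (hP₀ran : W t₀ * P₀ = w₀ • P₀) :
    P₀ * A' * P₀ =
      (((2 / ‖Complex.exp (θ * Complex.I) - w₀‖ ^ 2 : ℝ)) : ℂ) •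
        (P₀ * ((-Complex.I) • ((W t₀)⁻¹ * W')) * P₀) := by
  set z := Complex.exp (θ * Complex.I)
  have hU := hWu t₀ ht₀
  have hz : ‖z‖ = 1 := Complex.norm_exp_ofReal_mul_I θ
  have hw : ‖w₀‖ = 1 := by
    open scoped Matrix.Norms.L2Operator in exact spectrum.norm_eq_one_of_unitary hU hw₀
  have hzw : z ≠ w₀ := fun h => hθ (h ▸ hw₀)
  have hB : IsUnit (z • 1 - W t₀).det := by
    rw [← isUnit_iff_isUnit_det, ← Algebra.algebraMap_eq_smul_one]
    exact spectrum.notMem_iff.1 hθ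
  have hPW : P₀ * W t₀ = w₀ • P₀ :=
    hP₀herm.isSelfAdjoint.mul_eq_smul_of_mul_eq_smul hU hw hP₀ran
  have hBP : (z • 1 - W t₀) * P₀ = (z - w₀) • P₀ := by
    rw [sub_mul, smul_mul_assoc, one_mul, hP₀ran, sub_smul]
  have hPB : P₀ * (z • 1 - W t₀) = (z - w₀) • P₀ := by
    rw [mul_sub, mul_smul_comm, mul_one, hPW, sub_smul]
  have hRHS : P₀ * ((-Complex.I) • ((W t₀)⁻¹ * W')) * P₀ =
      (-Complex.I * starRingEnd ℂ w₀) • (P₀ * W' * P₀) := by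
    rw [inv_eq_left_inv (Unitary.star_mul_self_of_mem hU), mul_smul_comm, smul_mul_assoc,
      ← mul_assoc, hP₀herm.isSelfAdjoint.mul_star_eq_of_mul_eq_smul hP₀ran, smul_mul_assoc,
      smul_mul_assoc, smul_smul]
  rw [cayley_deriv_eq hWd hB hAd, mul_smul_comm, smul_mul_assoc,
    mul_nonsing_inv_mul_nonsing_inv_mul hB (sub_ne_zero.2 hzw) hBP hPB, hRHS, smul_smul, smul_smul,
    mul_assoc, ← div_eq_mul_inv, Complex.div_sub_sq_eq_neg_conj_div_norm_sq hz hw hzw]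
  congr 1
  push_cast
  ring

/-- With `W` a path of unitary matrices differentiable at `t₀`
(`W'(t₀) = i W(t₀) Ω` with `Ω := −i W(t₀)⁻¹ W'(t₀)`), `e^{iθ}` not an eigenvalue of `W(t₀)`,
and `A(t) := i(e^{iθ}I − W(t))⁻¹(e^{iθ}I + W(t))` (with derivative `A'` at `t₀`): if `w₀` is
an eigenvalue of `W(t₀)` and `P₀` is the orthogonal projection onto `ker(W(t₀) − w₀I)`, then
`P₀ A'(t₀) P₀ = (2/|e^{iθ} − w₀|²) P₀ Ω P₀`. -/
theorem projected_derivative {n : ℕ} (a b t₀ : ℝ) (ht₀ : t₀ ∈ Set.Ioo a b)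
    (W : ℝ → Matrix (Fin n) (Fin n) ℂ) (W' A' : Matrix (Fin n) (Fin n) ℂ)
    (hWu : ∀ t ∈ Set.Ioo a b, W t ∈ Matrix.unitaryGroup (Fin n) ℂ)
    (hWc : ∀ i j, ContinuousAt (fun t => W t i j) t₀)
    (hWd : ∀ i j, HasDerivAt (fun t => W t i j) (W' i j) t₀)
    (θ : ℝ) (hθ : Complex.exp (θ * Complex.I) ∉ spectrum ℂ (W t₀))
    (hAd : ∀ i j, HasDerivAt
      (fun t => (Complex.I •
        ((Complex.exp (θ * Complex.I) • (1 : Matrix (Fin n) (Fin n) ℂ) - W t)⁻¹ *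
          (Complex.exp (θ * Complex.I) • (1 : Matrix (Fin n) (Fin n) ℂ) + W t))) i j)
      (A' i j) t₀)
    (w₀ : ℂ) (hw₀ : w₀ ∈ spectrum ℂ (W t₀))
    (P₀ : Matrix (Fin n) (Fin n) ℂ)
    (hP₀herm : P₀.IsHermitian) (hP₀idem : P₀ * P₀ = P₀)
    (hP₀ran : W t₀ * P₀ = w₀ • P₀)
    (hP₀fix : ∀ v : Fin n → ℂ, W t₀ *ᵥ v = w₀ • v → P₀ *ᵥ v = v) :
    P₀ * A' * P₀ =
      (((2 / ‖Complex.exp (θ * Complex.I) - w₀‖ ^ 2 : ℝ)) : ℂ) •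
        (P₀ * ((-Complex.I) • ((W t₀)⁻¹ * W')) * P₀) :=
  projected_derivative_general a b t₀ ht₀ W W' A' hWu hWd θ hθ hAd w₀ hw₀ P₀ hP₀herm hP₀ran
end
end
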